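/- For all n ≥ 1, T_{2n+1}·B_{n-1} = (1 + T_{2n})·B_n, where T_0 = 0, T_1 = 1, T_n = 6T_{n-1} - T_{n-2} and B_0 = 1, B_1 = 5, B_n = 6B_{n-1} - B_{n-2}. -/
import Mathlib


def T : ℕ → ℤ
  | 0 => 0
  | 1 => 1
  | (n+2) => 6 * T (n+1) - T n

def B : ℕ → ℤ
  | 0 => 1
  | 1 => 5
  | (n+2) => 6 * B (n+1) - B n

lemma B_eq : ∀ n, B n = T (n+1) - T n
  | 0 => by simp [B, T]
  | 1 => by simp [B, T]
  | (n+2) => by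
    have h1 := B_eq (n+1)
    have h2 := B_eq n
    show 6 * B (n+1) - B n = (6 * T (n+2) - T (n+1)) - T (n+2)
    rw [h1, h2]
    show 6 * (T (n+2) - T (n+1)) - (T (n+1) - T n) =
      (6 * T (n+2) - T (n+1)) - T (n+2)
    have h3 : T (n+2) = 6 * T (n+1) - T n := rfl
    linarith [h3]

lemma cassini : ∀ n, T (n+1)^2 - T (n+2) * T n = 1
  | 0 => by simp [T]
  | (n+1) => by
    have ih := cassini n
    have h3 : T (n+3) = 6 * T (n+2) - T (n+1) := rfl
    have h4 : T (n+2) = 6 * T (n+1) - T n := rfl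
    show T (n+2)^2 - T (n+3) * T (n+1) = 1
    linear_combination ih - T (n+1) * h3 + T (n+2) * h4

lemma dbl : ∀ n, T (2*n+1) = T (n+1)^2 - T n ^ 2 ∧
    T (2*n+2) = T (n+2) * T (n+1) - T (n+1) * T n
  | 0 => by norm_num [T]
  | (n+1) => by
    obtain ⟨h1, h2⟩ := dbl n
    have e1 : 2*(n+1)+1 = (2*n+1)+2 := by ring
    have e2 : 2*(n+1)+2 = (2*n+2)+2 := by ring
    have e3 : 2*(n+1)+2 = (2*n+1)+3 := by ring
    have r1 : T ((2*n+1)+2) = 6 * T (2*n+2) - T (2*n+1) := rfl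
    have r2 : T ((2*n+1)+3) = 6 * T ((2*n+1)+2) - T (2*n+2) := rfl
    have rT2 : T (n+2) = 6 * T (n+1) - T n := rfl
    have rT3 : T (n+3) = 6 * T (n+2) - T (n+1) := rfl
    constructor
    · rw [e1, r1, h1, h2]
      rw [rT2]; ring
    · rw [e3, r2, r1, h1, h2, rT3, rT2]; ring

theorem stmt15 (n : ℕ) (hn : 1 ≤ n) : T (2*n+1) * B (n-1) = (1 + T (2*n)) * B n := by
  obtain ⟨m, rfl⟩ : ∃ m, n = m + 1 := ⟨n - 1, (Nat.succ_pred_eq_of_pos hn).symm⟩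
  simp only [Nat.add_sub_cancel]
  obtain ⟨h1, h2⟩ := dbl (m+1)
  have e1 : 2*(m+1)+1 = 2*(m+1)+1 := rfl
  have e2 : 2*(m+1) = 2*m+2 := by ring
  obtain ⟨h1', h2'⟩ := dbl m
  rw [h1, e2, h2', B_eq m, B_eq (m+1)]
  have hc := cassini m
  show (T (m+2)^2 - T (m+1)^2) * (T (m+1) - T m) =
    (1 + (T (m+2) * T (m+1) - T (m+1) * T m)) * (T (m+2) - T (m+1))
  linear_combination (T (m+2) - T (m+1)) * hc
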